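/- arXiv:2412.05352 — 3 statements merged into one kernel-verified Lean document; each statement's English description precedes it below -/
import Mathlib

section
/- For every even integer n ≥ 4, the vertex-distinguishing chromatic index of the complete graph K_n equals n+1, and for every odd integer n ≥ 3 it equals n. -/
/-- `φ : Sym2 V → ℕ` is a proper edge-`k`-coloring of `G`: every edge gets a color in
`{1,…,k}` and adjacent edges get distinct colors. -/
def IsPEC {V : Type*} (G : SimpleGraph V) (k : ℕ) (φ : Sym2 V → ℕ) : Prop :=
  (∀ e ∈ G.edgeSet, φ e ∈ Finset.Icc 1 k) ∧
  ∀ u v w : V, G.Adj u v → G.Adj u w → v ≠ w → φ s(u, v) ≠ φ s(u, w)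

/-- The set of colors appearing on edges incident with `v`. -/
def colorSet {V : Type*} [Fintype V] (G : SimpleGraph V) [DecidableRel G.Adj]
    (φ : Sym2 V → ℕ) (v : V) : Finset ℕ :=
  (G.neighborFinset v).image fun u => φ s(v, u)

/-- The sum of colors appearing on edges incident with `v`. -/
def colorSum {V : Type*} [Fintype V] (G : SimpleGraph V) [DecidableRel G.Adj]
    (φ : Sym2 V → ℕ) (v : V) : ℕ :=
  ∑ u ∈ G.neighborFinset v, φ s(v, u)

/-- A vertex-distinguishing proper edge-`k`-coloring. -/
def IsVDC {V : Type*} [Fintype V] (G : SimpleGraph V) [DecidableRel G.Adj]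
    (k : ℕ) (φ : Sym2 V → ℕ) : Prop :=
  IsPEC G k φ ∧ ∀ u v : V, u ≠ v → colorSet G φ u ≠ colorSet G φ v

/-- A sum-distinguishing proper edge-`k`-coloring. -/
def IsSDC {V : Type*} [Fintype V] (G : SimpleGraph V) [DecidableRel G.Adj]
    (k : ℕ) (φ : Sym2 V → ℕ) : Prop :=
  IsPEC G k φ ∧ ∀ u v : V, u ≠ v → colorSum G φ u ≠ colorSum G φ v

/-- The chromatic index: least `k` admitting a proper edge-`k`-coloring. -/
noncomputable def chromIndex {V : Type*} (G : SimpleGraph V) : ℕ :=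
  sInf {k | ∃ φ : Sym2 V → ℕ, IsPEC G k φ}

/-- The vertex-distinguishing chromatic index. -/
noncomputable def vdIndex {V : Type*} [Fintype V] (G : SimpleGraph V)
    [DecidableRel G.Adj] : ℕ :=
  sInf {k | ∃ φ : Sym2 V → ℕ, IsVDC G k φ}

/-- The sum-distinguishing chromatic index. -/
noncomputable def sdIndex {V : Type*} [Fintype V] (G : SimpleGraph V)
    [DecidableRel G.Adj] : ℕ :=
  sInf {k | ∃ φ : Sym2 V → ℕ, IsSDC G k φ}


lemma even_card_invol {α : Type*} [DecidableEq α] (s : Finset α) (f : α → α)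
    (hmem : ∀ a ∈ s, f a ∈ s) (hinv : ∀ a ∈ s, f (f a) = a) (hfix : ∀ a ∈ s, f a ≠ a) :
    Even s.card := by
  induction s using Finset.strongInduction with
  | _ s ih =>
    rcases s.eq_empty_or_nonempty with rfl | ⟨a, ha⟩
    · simp
    · have hfa : f a ∈ s := hmem a ha
      have hfane : f a ≠ a := hfix a ha
      set t := (s.erase a).erase (f a) with ht
      have hat : a ∉ t := by simp [ht]
      have htss : t ⊆ s := (Finset.erase_subset _ _).trans (Finset.erase_subset _ _)
      have htsub : t ⊂ s := ⟨htss, fun h => hat (h ha)⟩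
      have hmemt : ∀ b ∈ t, b ∈ s ∧ b ≠ a ∧ b ≠ f a := by
        intro b hb
        simp only [ht, Finset.mem_erase] at hb
        exact ⟨hb.2.2, hb.2.1, hb.1⟩
      have hft : ∀ b ∈ t, f b ∈ t := by
        intro b hb
        obtain ⟨hbs, hba, hbfa⟩ := hmemt b hb
        have h1 : f b ≠ f a := fun h => hba (by rw [← hinv b hbs, h, hinv a ha])
        have h2 : f b ≠ a := fun h => hbfa (by rw [← hinv b hbs, h])
        simp only [ht, Finset.mem_erase]
        exact ⟨h1, h2, hmem b hbs⟩
      have heven := ih t htsub (fun b hb => hft b hb)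
        (fun b hb => hinv b (hmemt b hb).1) (fun b hb => hfix b (hmemt b hb).1)
      have hcard : s.card = t.card + 2 := by
        have h1 : (s.erase a).card = s.card - 1 := Finset.card_erase_of_mem ha
        have h2 : t.card = (s.erase a).card - 1 :=
          Finset.card_erase_of_mem (Finset.mem_erase.mpr ⟨hfane, hfa⟩)
        have h3 : 2 ≤ s.card := Finset.one_lt_card.mpr ⟨a, ha, f a, hfa, fun h => hfane h.symm⟩
        omega
      rw [hcard]
      exact heven.add (Even.add_self 1)

lemma mem_colorSet_top {n : ℕ} {φ : Sym2 (Fin n) → ℕ} {v : Fin n} {c : ℕ} :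
    c ∈ colorSet (⊤ : SimpleGraph (Fin n)) φ v ↔ ∃ u, u ≠ v ∧ φ s(v, u) = c := by
  simp only [colorSet, Finset.mem_image, SimpleGraph.mem_neighborFinset, SimpleGraph.top_adj]
  constructor
  · rintro ⟨u, h1, h2⟩; exact ⟨u, Ne.symm h1, h2⟩
  · rintro ⟨u, h1, h2⟩; exact ⟨u, Ne.symm h1, h2⟩

lemma card_colorSet_top {n k : ℕ} {φ : Sym2 (Fin n) → ℕ} (h : IsPEC (⊤ : SimpleGraph (Fin n)) k φ)
    (v : Fin n) : (colorSet (⊤ : SimpleGraph (Fin n)) φ v).card = n - 1 := by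
  rw [colorSet, Finset.card_image_of_injOn, SimpleGraph.card_neighborFinset_eq_degree,
    SimpleGraph.complete_graph_degree, Fintype.card_fin]
  intro a ha b hb hab
  by_contra hne
  exact h.2 v a b (SimpleGraph.mem_neighborFinset _ _ _ |>.mp ha)
    (SimpleGraph.mem_neighborFinset _ _ _ |>.mp hb) hne hab

lemma colorSet_subset {n k : ℕ} {φ : Sym2 (Fin n) → ℕ}
    (h : IsPEC (⊤ : SimpleGraph (Fin n)) k φ) (v : Fin n) :
    colorSet (⊤ : SimpleGraph (Fin n)) φ v ⊆ Finset.Icc 1 k := by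
  intro c hc
  obtain ⟨u, hu, hc⟩ := mem_colorSet_top.mp hc
  exact hc ▸ h.1 s(v, u) (by simp [SimpleGraph.mem_edgeSet, Ne.symm hu])

lemma vdc_lb {n k : ℕ} (hn : 3 ≤ n) {φ : Sym2 (Fin n) → ℕ}
    (h : IsVDC (⊤ : SimpleGraph (Fin n)) k φ) : n ≤ k := by
  have h0 : (⟨0, by omega⟩ : Fin n) ≠ (⟨1, by omega⟩ : Fin n) := by
    simp [Fin.ext_iff]
  have hcard := card_colorSet_top h.1 ⟨0, by omega⟩
  have hsub := colorSet_subset h.1 (⟨0, by omega⟩ : Fin n)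
  have hk1 : n - 1 ≤ k := by
    have := Finset.card_le_card hsub
    rw [hcard, Nat.card_Icc] at this; omega
  by_contra hlt
  have hkeq : k = n - 1 := by omega
  subst hkeq
  have heq : ∀ v : Fin n, colorSet (⊤ : SimpleGraph (Fin n)) φ v = Finset.Icc 1 (n-1) := by
    intro v
    apply Finset.eq_of_subset_of_card_le (colorSet_subset h.1 v)
    rw [card_colorSet_top h.1 v, Nat.card_Icc]
    omega
  exact h.2 _ _ h0 ((heq ⟨0, by omega⟩).trans (heq ⟨1, by omega⟩).symm)

lemma vdc_even_lb {n k : ℕ} (hn : 4 ≤ n) (hev : Even n) {φ : Sym2 (Fin n) → ℕ}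
    (h : IsVDC (⊤ : SimpleGraph (Fin n)) k φ) : n + 1 ≤ k := by
  have hk := vdc_lb (by omega) h
  by_contra hlt
  have hkeq : n = k := by omega
  subst hkeq
  -- each vertex misses exactly one color
  set M : Fin n → Finset ℕ := fun v => Finset.Icc 1 n \ colorSet (⊤ : SimpleGraph (Fin n)) φ v
    with hM
  have hMcard : ∀ v, (M v).card = 1 := by
    intro v
    rw [hM]
    rw [Finset.card_sdiff_of_subset (colorSet_subset h.1 v), card_colorSet_top h.1 v, Nat.card_Icc]
    omega
  have hCS : ∀ v, colorSet (⊤ : SimpleGraph (Fin n)) φ v = Finset.Icc 1 n \ M v := by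
    intro v
    rw [hM, Finset.sdiff_sdiff_eq_self (colorSet_subset h.1 v)]
  choose m hm using fun v => Finset.card_eq_one.mp (hMcard v)
  have hminj : Function.Injective m := by
    intro u v huv
    by_contra hne
    apply h.2 u v hne
    rw [hCS u, hCS v, hm u, hm v, huv]
  have hmmem : ∀ v, m v ∈ Finset.Icc 1 n := by
    intro v
    have : m v ∈ M v := by rw [hm v]; exact Finset.mem_singleton_self _
    exact (Finset.sdiff_subset) this
  -- m is surjective onto Icc 1 n
  have himg : Finset.univ.image m = Finset.Icc 1 n := by
    apply Finset.eq_of_subset_of_card_le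
    · intro c hc
      obtain ⟨v, _, rfl⟩ := Finset.mem_image.mp hc
      exact hmmem v
    · rw [Finset.card_image_of_injective _ hminj, Finset.card_univ, Fintype.card_fin,
        Nat.card_Icc]
      omega
  -- pick color 1
  obtain ⟨v₀, -, hv₀⟩ := Finset.mem_image.mp (himg ▸ (Finset.mem_Icc.mpr ⟨le_refl 1, by omega⟩))
  -- the set of vertices seeing color 1
  set A : Finset (Fin n) := Finset.univ.filter
    (fun v => 1 ∈ colorSet (⊤ : SimpleGraph (Fin n)) φ v) with hA
  have hmemA : ∀ v, v ∈ A ↔ v ≠ v₀ := by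
    intro v
    rw [hA, Finset.mem_filter]
    constructor
    · rintro ⟨-, hv⟩ rfl
      have : (1 : ℕ) ∈ M v := by rw [hm v, hv₀]; exact Finset.mem_singleton_self _
      rw [hM] at this
      exact (Finset.mem_sdiff.mp this).2 hv
    · intro hne
      refine ⟨Finset.mem_univ _, ?_⟩
      by_contra hv
      have h1 : (1 : ℕ) ∈ M v := by
        rw [hM, Finset.mem_sdiff]
        exact ⟨Finset.mem_Icc.mpr ⟨le_refl 1, by omega⟩, hv⟩
      rw [hm v, Finset.mem_singleton] at h1
      exact hne (hminj (by rw [← h1, hv₀]))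
  have hAcard : A.card = n - 1 := by
    have : A = Finset.univ.erase v₀ := by
      ext v; rw [hmemA, Finset.mem_erase]; simp
    rw [this, Finset.card_erase_of_mem (Finset.mem_univ _), Finset.card_univ, Fintype.card_fin]
  -- involution on A
  set f : Fin n → Fin n := fun v =>
    if hv : ∃ u, u ≠ v ∧ φ s(v, u) = 1 then hv.choose else v with hf
  have hfspec : ∀ v ∈ A, f v ≠ v ∧ φ s(v, f v) = 1 := by
    intro v hv
    rw [hA, Finset.mem_filter] at hv
    obtain ⟨u, hu, hφ⟩ := mem_colorSet_top.mp hv.2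
    have hex : ∃ u, u ≠ v ∧ φ s(v, u) = 1 := ⟨u, hu, hφ⟩
    rw [hf]
    simp only [hex, dif_pos]
    exact ⟨hex.choose_spec.1, hex.choose_spec.2⟩
  have hfA : ∀ v ∈ A, f v ∈ A := by
    intro v hv
    obtain ⟨hne, hφ⟩ := hfspec v hv
    rw [hA, Finset.mem_filter]
    refine ⟨Finset.mem_univ _, mem_colorSet_top.mpr ⟨v, fun hh => hne hh.symm, ?_⟩⟩
    rw [Sym2.eq_swap]; exact hφ
  have hfinv : ∀ v ∈ A, f (f v) = v := by
    intro v hv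
    obtain ⟨hne, hφ⟩ := hfspec v hv
    obtain ⟨hne2, hφ2⟩ := hfspec (f v) (hfA v hv)
    by_contra hne3
    have hadj1 : (⊤ : SimpleGraph (Fin n)).Adj (f v) (f (f v)) := by simp [hne2.symm]
    have hadj2 : (⊤ : SimpleGraph (Fin n)).Adj (f v) v := by simp [hne]
    have := h.1.2 (f v) (f (f v)) v hadj1 hadj2 hne3
    rw [hφ2, Sym2.eq_swap, hφ] at this
    exact this rfl
  have heven := even_card_invol A f hfA hfinv (fun v hv => (hfspec v hv).1)
  rw [hAcard] at heven
  obtain ⟨j, hj⟩ := hev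
  obtain ⟨i, hi⟩ := heven
  omega

section Odd
variable {n : ℕ}

/-- the cyclic coloring -/
noncomputable def φodd (n : ℕ) : Sym2 (Fin n) → ℕ :=
  Sym2.lift ⟨fun i j => ((i.val + j.val : ℕ) : ZMod n).val + 1, fun i j => by
    simp [Nat.add_comm]⟩

lemma φodd_apply (a b : Fin n) :
    φodd n s(a, b) = ((a.val : ZMod n) + (b.val : ZMod n)).val + 1 := by
  simp [φodd]

lemma zmod_fin_inj [NeZero n] {a b : Fin n} (h : (a.val : ZMod n) = (b.val : ZMod n)) :
    a = b := by
  have := congrArg ZMod.val h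
  rwa [ZMod.val_cast_of_lt a.isLt, ZMod.val_cast_of_lt b.isLt, ← Fin.ext_iff] at this

lemma odd_construction (hn : 3 ≤ n) (ho : Odd n) :
    ∃ φ : Sym2 (Fin n) → ℕ, IsVDC (⊤ : SimpleGraph (Fin n)) n φ := by
  haveI : NeZero n := ⟨by omega⟩
  have h2 : IsUnit (2 : ZMod n) := by
    have := (ZMod.isUnit_iff_coprime 2 n).mpr ho.coprime_two_left
    simpa using this
  refine ⟨φodd n, ⟨⟨?_, ?_⟩, ?_⟩⟩
  · rintro e -
    induction e using Sym2.inductionOn with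
    | hf a b =>
      rw [φodd_apply]
      have := ZMod.val_lt ((a.val : ZMod n) + (b.val : ZMod n))
      simp [Finset.mem_Icc]
      omega
  · intro u v w _ _ hvw
    rw [φodd_apply, φodd_apply]
    intro hc
    apply hvw
    apply zmod_fin_inj (n := n)
    have heq : ((u.val : ZMod n) + (v.val : ZMod n)) = ((u.val : ZMod n) + (w.val : ZMod n)) :=
      ZMod.val_injective n (by omega)
    exact add_left_cancel heq
  · intro u v huv
    set zu := ((u.val : ℕ) : ZMod n) with hzu
    set zv := ((v.val : ℕ) : ZMod n) with hzv
    have hzuv : zu ≠ zv := fun h => huv (zmod_fin_inj h)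
    set c : ℕ := (zv + zv).val + 1 with hc
    have hmem : c ∈ colorSet (⊤ : SimpleGraph (Fin n)) (φodd n) u := by
      set w : Fin n := ⟨(zv + zv - zu).val, ZMod.val_lt _⟩ with hw
      have hzw : ((w.val : ℕ) : ZMod n) = zv + zv - zu := by
        rw [hw]
        simp [ZMod.natCast_val, ZMod.cast_id]
      refine mem_colorSet_top.mpr ⟨w, ?_, ?_⟩
      · intro hwu
        apply hzuv
        have : ((w.val : ℕ) : ZMod n) = zu := by rw [hwu]
        rw [hzw] at this
        have h2z : 2 * zu = 2 * zv := by rw [two_mul, two_mul]; linear_combination -this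
        exact h2.mul_left_cancel h2z
      · rw [φodd_apply, ← hzu, hzw, hc]
        congr 2
        ring
    have hnmem : c ∉ colorSet (⊤ : SimpleGraph (Fin n)) (φodd n) v := by
      intro hcmem
      obtain ⟨w, hwv, hφ⟩ := mem_colorSet_top.mp hcmem
      rw [φodd_apply, ← hzv, hc] at hφ
      have heq : zv + ((w.val : ℕ) : ZMod n) = zv + zv := ZMod.val_injective n (by omega)
      exact hwv (zmod_fin_inj (add_left_cancel heq))
    intro hset
    rw [hset] at hmem
    exact hnmem hmem
end Odd

/-- start of the "covered" segment -/
def cz (n : ℕ) : ℕ := n / 2 - (n / 2) % 2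

/-- partner of a covered vertex (on values) -/
def pval (n x : ℕ) : ℕ := if (x - cz n) % 2 = 0 then x + 1 else x - 1

/-- the special matching (on values) -/
def isMatch (n x y : ℕ) : Prop :=
  cz n ≤ min x y ∧ (min x y - cz n) % 2 = 0 ∧ max x y = min x y + 1

instance (n x y : ℕ) : Decidable (isMatch n x y) := by unfold isMatch; infer_instance

lemma isMatch_comm {n x y : ℕ} : isMatch n x y ↔ isMatch n y x := by
  unfold isMatch; rw [min_comm, max_comm]

lemma pval_cases (n x : ℕ) :
    (pval n x = x + 1 ∧ (x - cz n) % 2 = 0) ∨ (pval n x = x - 1 ∧ (x - cz n) % 2 = 1) := by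
  unfold pval
  split_ifs with h
  · exact Or.inl ⟨rfl, h⟩
  · exact Or.inr ⟨rfl, by omega⟩

lemma cz_le_half (n : ℕ) : cz n ≤ n / 2 := by unfold cz; omega

lemma pval_lt {n x : ℕ} (hn : 4 ≤ n) (h2 : n % 2 = 0) (hx : cz n ≤ x) (hxn : x < n) :
    pval n x < n := by
  rcases pval_cases n x with ⟨hp, he⟩ | ⟨hp, he⟩
  · unfold cz at *; omega
  · omega

lemma pval_ne {n x : ℕ} (hx : cz n ≤ x) : pval n x ≠ x := by
  rcases pval_cases n x with ⟨hp, he⟩ | ⟨hp, he⟩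
  · omega
  · unfold cz at *; omega

lemma pval_match {n x : ℕ} (hn : 4 ≤ n) (h2 : n % 2 = 0) (hx : cz n ≤ x) (hxn : x < n) :
    isMatch n x (pval n x) := by
  unfold isMatch
  rcases pval_cases n x with ⟨hp, he⟩ | ⟨hp, he⟩ <;> rw [hp]
  · constructor
    · omega
    · constructor
      · omega
      · omega
  · unfold cz at *
    omega

lemma match_unique {n x y z : ℕ} (h1 : isMatch n x y) (h2 : isMatch n x z) : y = z := by
  unfold isMatch at *
  omega

lemma match_cov {n x y : ℕ} (h : isMatch n x y) : cz n ≤ x ∧ cz n ≤ y := by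
  unfold isMatch at h
  omega

lemma match_pval {n x y : ℕ} (hn : 4 ≤ n) (h2 : n % 2 = 0) (hxn : x < n)
    (h : isMatch n x y) : y = pval n x :=
  match_unique h (pval_match hn h2 (match_cov h).1 hxn)

lemma mod_cases {n q : ℕ} (h : q < 2 * n) :
    (q < n ∧ q % n = q) ∨ (n ≤ q ∧ q % n = q - n) := by
  rcases Nat.lt_or_ge q n with h1 | h1
  · exact Or.inl ⟨h1, Nat.mod_eq_of_lt h1⟩
  · exact Or.inr ⟨h1, by rw [Nat.mod_eq_sub_mod h1, Nat.mod_eq_of_lt (by omega)]⟩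

/-- main combinatorial lemma: missing pairs of distinct covered vertices differ -/
lemma pairs_distinct {n u v : ℕ} (hn : 4 ≤ n) (h2 : n % 2 = 0)
    (hu : cz n ≤ u) (hv : cz n ≤ v) (hun : u < n) (hvn : v < n) (huv : u ≠ v) :
    ∃ d < n, (d ≡ 2 * v [MOD n] ∨ d ≡ v + pval n v [MOD n]) ∧
      ¬ d ≡ 2 * u [MOD n] ∧ ¬ d ≡ u + pval n u [MOD n] := by
  have hpu := pval_cases n u
  have hpv := pval_cases n v
  have hpul := pval_lt hn h2 hu hun
  have hpvl := pval_lt hn h2 hv hvn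
  have m1 := mod_cases (show 2 * u < 2 * n by omega)
  have m2 := mod_cases (show 2 * v < 2 * n by omega)
  have m3 := mod_cases (show u + pval n u < 2 * n by omega)
  have m4 := mod_cases (show v + pval n v < 2 * n by omega)
  have b1 : 2 * u % n < n := Nat.mod_lt _ (by omega)
  have b2 : 2 * v % n < n := Nat.mod_lt _ (by omega)
  have b3 : (u + pval n u) % n < n := Nat.mod_lt _ (by omega)
  have b4 : (v + pval n v) % n < n := Nat.mod_lt _ (by omega)
  simp only [Nat.ModEq]
  have hczf : cz n % 2 = 0 ∧ (2 * cz n = n ∨ 2 * cz n = n - 2) := by unfold cz; omega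
  generalize hgen : cz n = c at *
  by_cases hc : 2 * v % n = 2 * u % n
  · -- then v = u + n/2 or u = v + n/2 ; use the odd color of v
    refine ⟨(v + pval n v) % n, b4,
      Or.inr (Nat.mod_mod_of_dvd _ dvd_rfl), ?_, ?_⟩
    · rw [Nat.mod_mod_of_dvd _ dvd_rfl]
      omega
    · rw [Nat.mod_mod_of_dvd _ dvd_rfl]
      omega
  · refine ⟨2 * v % n, b2, Or.inl (Nat.mod_mod_of_dvd _ dvd_rfl), ?_, ?_⟩
    · rwa [Nat.mod_mod_of_dvd _ dvd_rfl]
    · rw [Nat.mod_mod_of_dvd _ dvd_rfl]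
      omega


noncomputable def φeven (n : ℕ) : Sym2 (Fin n) → ℕ :=
  Sym2.lift ⟨fun a b => if isMatch n a.val b.val then n + 1
      else ((a.val + b.val : ℕ) : ZMod n).val + 1,
    fun a b => by
      dsimp only
      exact if_congr isMatch_comm rfl (by rw [Nat.add_comm a.val b.val])⟩

lemma φeven_apply {n : ℕ} (a b : Fin n) :
    φeven n s(a, b) = if isMatch n a.val b.val then n + 1
      else ((a.val + b.val : ℕ) : ZMod n).val + 1 := by
  simp [φeven]

lemma even_construction {n : ℕ} (hn : 4 ≤ n) (hev : Even n) :
    ∃ φ : Sym2 (Fin n) → ℕ, IsVDC (⊤ : SimpleGraph (Fin n)) (n + 1) φ := by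
  haveI : NeZero n := ⟨by omega⟩
  have h2 : n % 2 = 0 := Nat.even_iff.mp hev
  -- value of non-match colors is ≤ n
  have hvlt : ∀ x : ZMod n, x.val + 1 ≤ n := fun x => ZMod.val_lt x
  refine ⟨φeven n, ⟨⟨?_, ?_⟩, ?_⟩⟩
  · rintro e -
    induction e using Sym2.inductionOn with
    | hf a b =>
      rw [φeven_apply]
      split_ifs
      · simp
      · have := hvlt ((a.val + b.val : ℕ) : ZMod n)
        simp only [Finset.mem_Icc]
        omega
  · intro u v w _ _ hvw hcol
    rw [φeven_apply, φeven_apply] at hcol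
    split_ifs at hcol with hm1 hm2 hm2
    · exact hvw (Fin.ext (match_unique hm1 hm2))
    · have := hvlt ((u.val + w.val : ℕ) : ZMod n); omega
    · have := hvlt ((u.val + v.val : ℕ) : ZMod n); omega
    · apply hvw
      apply zmod_fin_inj (n := n)
      have heq : ((u.val + v.val : ℕ) : ZMod n) = ((u.val + w.val : ℕ) : ZMod n) :=
        ZMod.val_injective n (by omega)
      push_cast at heq
      exact add_left_cancel heq
  · -- distinguishing
    have hcovuncov : ∀ u v : Fin n, cz n ≤ u.val → ¬ cz n ≤ v.val →
        colorSet (⊤ : SimpleGraph (Fin n)) (φeven n) u ≠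
        colorSet (⊤ : SimpleGraph (Fin n)) (φeven n) v := by
      intro u v hcu hcv hset
      have hmem : (n+1) ∈ colorSet (⊤ : SimpleGraph (Fin n)) (φeven n) u := by
        refine mem_colorSet_top.mpr ⟨⟨pval n u.val, pval_lt hn h2 hcu u.isLt⟩, ?_, ?_⟩
        · intro hh
          exact pval_ne hcu (congrArg Fin.val hh)
        · rw [φeven_apply]
          simp only [if_pos (pval_match hn h2 hcu u.isLt)]
      rw [hset] at hmem
      obtain ⟨w, hwv, hφ⟩ := mem_colorSet_top.mp hmem
      rw [φeven_apply] at hφ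
      split_ifs at hφ with hm
      · exact hcv (match_cov hm).1
      · have := hvlt ((v.val + w.val : ℕ) : ZMod n); omega
    intro u v huv
    by_cases hcu : cz n ≤ u.val <;> by_cases hcv : cz n ≤ v.val
    · -- both covered
      obtain ⟨d, hdn, hdv, hdu1, hdu2⟩ :=
        pairs_distinct hn h2 hcu hcv u.isLt v.isLt (fun hh => huv (Fin.ext hh))
      set c : ℕ := d + 1 with hc
      set zu : ZMod n := ((u.val : ℕ) : ZMod n) with hzu
      have hmem : c ∈ colorSet (⊤ : SimpleGraph (Fin n)) (φeven n) u := by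
        set w : Fin n := ⟨((d : ZMod n) - zu).val, ZMod.val_lt _⟩ with hw
        have hzw : ((w.val : ℕ) : ZMod n) = (d : ZMod n) - zu := by
          rw [hw]; simp [ZMod.natCast_val, ZMod.cast_id]
        have hwu : w ≠ u := by
          intro hh
          apply hdu1
          rw [← ZMod.natCast_eq_natCast_iff]
          have : ((w.val : ℕ) : ZMod n) = zu := by rw [hh]
          rw [hzw] at this
          push_cast
          linear_combination this
        have hnm : ¬ isMatch n u.val w.val := by
          intro hmatch
          apply hdu2
          rw [← ZMod.natCast_eq_natCast_iff]
          have hwp : w.val = pval n u.val := match_pval hn h2 u.isLt hmatch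
          have : ((w.val : ℕ) : ZMod n) = ((pval n u.val : ℕ) : ZMod n) := by rw [hwp]
          rw [hzw] at this
          push_cast
          linear_combination this
        refine mem_colorSet_top.mpr ⟨w, hwu, ?_⟩
        rw [φeven_apply, if_neg hnm]
        have : ((u.val + w.val : ℕ) : ZMod n) = (d : ZMod n) := by
          push_cast
          rw [hzw, hzu]
          ring
        rw [this, ZMod.val_cast_of_lt hdn]
      have hnmem : c ∉ colorSet (⊤ : SimpleGraph (Fin n)) (φeven n) v := by
        intro hcm
        obtain ⟨w, hwv, hφ⟩ := mem_colorSet_top.mp hcm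
        rw [φeven_apply] at hφ
        split_ifs at hφ with hm
        · omega
        · have hval : ((v.val + w.val : ℕ) : ZMod n) = (d : ZMod n) := by
            apply ZMod.val_injective
            rw [ZMod.val_cast_of_lt hdn]
            omega
          rcases hdv with hdv | hdv
          · apply hwv
            apply zmod_fin_inj (n := n)
            have : ((d : ℕ) : ZMod n) = ((2 * v.val : ℕ) : ZMod n) :=
              (ZMod.natCast_eq_natCast_iff _ _ _).mpr hdv
            rw [this] at hval
            push_cast at hval ⊢
            linear_combination hval
          · apply hm
            have : ((d : ℕ) : ZMod n) = ((v.val + pval n v.val : ℕ) : ZMod n) :=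
              (ZMod.natCast_eq_natCast_iff _ _ _).mpr hdv
            rw [this] at hval
            have hwp : (w.val : ℕ) = pval n v.val := by
              have hlt : pval n v.val < n := pval_lt hn h2 hcv v.isLt
              have : ((w.val : ℕ) : ZMod n) = ((pval n v.val : ℕ) : ZMod n) := by
                push_cast at hval ⊢
                linear_combination hval
              have := congrArg ZMod.val this
              rwa [ZMod.val_cast_of_lt w.isLt, ZMod.val_cast_of_lt hlt] at this
            rw [hwp]
            exact pval_match hn h2 hcv v.isLt
      intro hset
      rw [hset] at hmem
      exact hnmem hmem
    · exact hcovuncov u v hcu hcv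
    · exact fun hset => hcovuncov v u hcv hcu hset.symm
    · -- both uncovered
      push_neg at hcu hcv
      set zu : ZMod n := ((u.val : ℕ) : ZMod n) with hzu
      set zv : ZMod n := ((v.val : ℕ) : ZMod n) with hzv
      have hczn : cz n ≤ n / 2 := cz_le_half n
      set c : ℕ := (zv + zv).val + 1 with hc
      have hnmuw : ∀ w : Fin n, ¬ isMatch n u.val w.val := by
        intro w hmatch
        have := (match_cov hmatch).1
        omega
      have hnmvw : ∀ w : Fin n, ¬ isMatch n v.val w.val := by
        intro w hmatch
        have := (match_cov hmatch).1
        omega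
      have hmem : c ∈ colorSet (⊤ : SimpleGraph (Fin n)) (φeven n) u := by
        set w : Fin n := ⟨(zv + zv - zu).val, ZMod.val_lt _⟩ with hw
        have hzw : ((w.val : ℕ) : ZMod n) = zv + zv - zu := by
          rw [hw]; simp [ZMod.natCast_val, ZMod.cast_id]
        have hwu : w ≠ u := by
          intro hh
          apply huv
          apply zmod_fin_inj (n := n)
          have : ((w.val : ℕ) : ZMod n) = zu := by rw [hh]
          rw [hzw] at this
          have h2z : ((u.val + u.val : ℕ) : ZMod n) = ((v.val + v.val : ℕ) : ZMod n) := by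
            push_cast
            linear_combination -this
          have h3 := congrArg ZMod.val h2z
          rw [ZMod.val_cast_of_lt (by omega), ZMod.val_cast_of_lt (by omega)] at h3
          have h4 : u.val = v.val := by omega
          exact congrArg Nat.cast h4
        refine mem_colorSet_top.mpr ⟨w, hwu, ?_⟩
        rw [φeven_apply, if_neg (hnmuw w), hc]
        congr 2
        push_cast
        rw [hzw, hzu]
        ring
      have hnmem : c ∉ colorSet (⊤ : SimpleGraph (Fin n)) (φeven n) v := by
        intro hcm
        obtain ⟨w, hwv, hφ⟩ := mem_colorSet_top.mp hcm
        rw [φeven_apply, if_neg (hnmvw w)] at hφ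
        apply hwv
        apply zmod_fin_inj (n := n)
        have heq : ((v.val + w.val : ℕ) : ZMod n) = zv + zv :=
          ZMod.val_injective n (by omega)
        push_cast at heq
        rw [← hzv] at heq
        linear_combination heq - hzv.symm
      intro hset
      rw [hset] at hmem
      exact hnmem hmem


/-- The vertex-distinguishing chromatic index of `K_n` is `n+1` for even `n ≥ 4`
and `n` for odd `n ≥ 3`. -/
theorem stmt2 (n : ℕ) :
    (4 ≤ n → Even n → vdIndex (⊤ : SimpleGraph (Fin n)) = n + 1) ∧
    (3 ≤ n → Odd n → vdIndex (⊤ : SimpleGraph (Fin n)) = n) := by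
  constructor
  · intro hn hev
    obtain ⟨φ, hφ⟩ := even_construction hn hev
    have hmem : (n + 1) ∈ {k | ∃ φ : Sym2 (Fin n) → ℕ,
        IsVDC (⊤ : SimpleGraph (Fin n)) k φ} := ⟨φ, hφ⟩
    refine le_antisymm (Nat.sInf_le hmem) (le_csInf ⟨n + 1, hmem⟩ ?_)
    rintro k ⟨ψ, hψ⟩
    exact vdc_even_lb hn hev hψ
  · intro hn ho
    obtain ⟨φ, hφ⟩ := odd_construction hn ho
    have hmem : n ∈ {k | ∃ φ : Sym2 (Fin n) → ℕ,
        IsVDC (⊤ : SimpleGraph (Fin n)) k φ} := ⟨φ, hφ⟩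
    refine le_antisymm (Nat.sInf_le hmem) (le_csInf ⟨n, hmem⟩ ?_)
    rintro k ⟨ψ, hψ⟩
    exact vdc_lb hn hψ
end

section
/- For every even integer n ≥ 4, the sum-distinguishing chromatic index of the complete graph K_n equals n+1, and for every odd integer n ≥ 3 it equals n. -/
/-! A sum-distinguishing colouring is vertex-distinguishing, since the colour sum at a vertex is
determined by its colour set. In the `(n - 1)`-regular graph `K_n` a vertex-distinguishing colouring
needs `n` colours, as with `n - 1` colours every vertex sees all of them. With exactly `n` colours
every vertex misses one colour and distinct vertices miss distinct colours, so the colour missed at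
one vertex appears at the `n - 1` others, which its colour class pairs up: `n` is odd.

Conversely, colouring `ij` by `(i + j mod n) + 1` gives vertex `v` the colour sum `C - (2v mod n)`,
which is injective for odd `n`. For even `n`, recolouring a suitable matching with `n + 1` makes the
sums distinct. -/

open Finset Function SimpleGraph

section General

variable {V : Type*} {G : SimpleGraph V} {k : ℕ} {φ : Sym2 V → ℕ}

namespace IsPEC

variable [Fintype V] [DecidableRel G.Adj]

lemma injOn_neighborFinset (h : IsPEC G k φ) (v : V) :
    Set.InjOn (fun u => φ s(v, u)) (G.neighborFinset v) :=
  fun a ha b hb hab =>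
    by_contra fun hne => h.2 v a b (by simpa using ha) (by simpa using hb) hne hab

lemma card_colorSet (h : IsPEC G k φ) (v : V) : #(colorSet G φ v) = G.degree v :=
  card_image_of_injOn (h.injOn_neighborFinset v)

lemma colorSum_eq_sum_colorSet (h : IsPEC G k φ) (v : V) :
    colorSum G φ v = ∑ c ∈ colorSet G φ v, c :=
  (sum_image (f := id) fun _ ha _ hb hab => h.injOn_neighborFinset v ha hb hab).symm

lemma colorSet_subset_Icc (h : IsPEC G k φ) (v : V) : colorSet G φ v ⊆ Icc 1 k := by
  intro c hc
  obtain ⟨u, hu, rfl⟩ := mem_image.mp hc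
  exact h.1 _ ((mem_neighborFinset G v u).mp hu)

lemma colorSet_eq_Icc (h : IsPEC G k φ) {v : V} (hv : G.degree v = k) :
    colorSet G φ v = Icc 1 k :=
  eq_of_subset_of_card_le (h.colorSet_subset_Icc v) (by simp [h.card_colorSet, hv])

lemma colorSet_eq_erase {d c : ℕ} (h : IsPEC G (d + 1) φ) {v : V} (hv : G.degree v = d)
    (hc : c ∈ Icc 1 (d + 1)) (hcv : c ∉ colorSet G φ v) :
    colorSet G φ v = (Icc 1 (d + 1)).erase c := by
  refine eq_of_subset_of_card_le (fun x hx => mem_erase.mpr ⟨?_, h.colorSet_subset_Icc v hx⟩) ?_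
  · rintro rfl
    exact hcv hx
  · simp [card_erase_of_mem hc, h.card_colorSet, hv]

/-- The vertices at which colour `c` appears are the odd-degree vertices of the subgraph formed
by the `c`-coloured edges, so by the handshake lemma there is an even number of them. -/
lemma even_card_filter_mem_colorSet (h : IsPEC G k φ) (c : ℕ) :
    Even #{v | c ∈ colorSet G φ v} := by
  classical
  let H : SimpleGraph V :=
    { Adj u w := G.Adj u w ∧ φ s(u, w) = c
      symm := ⟨fun _ _ huw => ⟨huw.1.symm, by rw [Sym2.eq_swap]; exact huw.2⟩⟩
      loopless := ⟨fun _ hu => G.irrefl hu.1⟩ }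
  convert H.even_card_odd_degree_vertices using 3 with v
  have hdeg : H.degree v = #{u | G.Adj v u ∧ φ s(v, u) = c} := by
    rw [← card_neighborFinset_eq_degree, neighborFinset_eq_filter]
  have hle : H.degree v ≤ 1 := by
    rw [hdeg, card_le_one]
    intro a ha b hb
    simp only [mem_filter, mem_univ, true_and] at ha hb
    by_contra hab
    exact h.2 v a b ha.1 hb.1 hab (ha.2.trans hb.2.symm)
  have hmem : c ∈ colorSet G φ v ↔ 0 < H.degree v := by
    simp [hdeg, colorSet, card_pos, Finset.Nonempty]
  rw [hmem, Nat.odd_iff]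
  omega

end IsPEC

variable [Fintype V] [DecidableRel G.Adj]

lemma IsSDC.isVDC (h : IsSDC G k φ) : IsVDC G k φ :=
  ⟨h.1, fun u v huv hset => h.2 u v huv <| by
    rw [h.1.colorSum_eq_sum_colorSet, h.1.colorSum_eq_sum_colorSet, hset]⟩

namespace IsVDC

lemma lt_of_isRegularOfDegree {d : ℕ} (h : IsVDC G k φ) (hreg : G.IsRegularOfDegree d)
    {u v : V} (huv : u ≠ v) : d < k := by
  have hle : d ≤ k := by
    simpa [h.1.card_colorSet, hreg u] using card_le_card (h.1.colorSet_subset_Icc u)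
  refine lt_of_le_of_ne hle fun hdk => h.2 u v huv ?_
  rw [h.1.colorSet_eq_Icc (hreg u ▸ hdk), h.1.colorSet_eq_Icc (hreg v ▸ hdk)]

lemma odd_card_of_isRegularOfDegree [Nonempty V] [DecidableEq V] {d : ℕ}
    (h : IsVDC G (d + 1) φ) (hreg : G.IsRegularOfDegree d) : Odd (Fintype.card V) := by
  obtain ⟨a⟩ := ‹Nonempty V›
  obtain ⟨c, hc, hca⟩ := exists_mem_notMem_of_card_lt_card
    (s := colorSet G φ a) (t := Icc 1 (d + 1)) (by simp [h.1.card_colorSet, hreg a])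
  have hfilter : ({v | c ∈ colorSet G φ v} : Finset V) = univ.erase a := by
    ext v
    simp only [mem_filter, mem_univ, true_and, mem_erase, and_true]
    refine ⟨fun hcv hva => hca (hva ▸ hcv), fun hva => ?_⟩
    by_contra hcv
    exact h.2 v a hva <| by
      rw [h.1.colorSet_eq_erase (hreg v) hc hcv, h.1.colorSet_eq_erase (hreg a) hc hca]
  have heven := h.1.even_card_filter_mem_colorSet c
  rw [hfilter, card_erase_of_mem (mem_univ a), card_univ] at heven
  have hpos := Fintype.card_pos (α := V)
  rw [Nat.even_iff] at heven
  rw [Nat.odd_iff]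
  omega

end IsVDC

lemma sdIndex_eq (hk : ∃ φ, IsSDC G k φ)
    (hmin : ∀ k' (φ : Sym2 V → ℕ), IsSDC G k' φ → k ≤ k') :
    sdIndex G = k :=
  le_antisymm (Nat.sInf_le hk) (le_csInf ⟨k, hk⟩ fun _ ⟨φ, hφ⟩ => hmin _ φ hφ)

lemma colorSum_top_add [DecidableEq V] (φ : Sym2 V → ℕ) (v : V) :
    colorSum ⊤ φ v + φ s(v, v) = ∑ u, φ s(v, u) := by
  rw [colorSum, neighborFinset_top, ← sum_singleton (fun u => φ s(v, u)) v, sum_compl_add_sum]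

end General

section Complete

variable {n : ℕ}

lemma isRegularOfDegree_top_fin : (⊤ : SimpleGraph (Fin n)).IsRegularOfDegree (n - 1) := by
  simpa using IsRegularOfDegree.top (V := Fin n)

lemma IsVDC.le_of_top {k : ℕ} {φ : Sym2 (Fin n) → ℕ} (hn : 2 ≤ n)
    (h : IsVDC (⊤ : SimpleGraph (Fin n)) k φ) : n ≤ k := by
  have := h.lt_of_isRegularOfDegree isRegularOfDegree_top_fin
    (u := ⟨0, by omega⟩) (v := ⟨1, by omega⟩) (by simp [Fin.ext_iff])
  omega

lemma IsVDC.lt_of_top_of_even {k : ℕ} {φ : Sym2 (Fin n) → ℕ} (hn : 2 ≤ n) (hev : Even n)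
    (h : IsVDC (⊤ : SimpleGraph (Fin n)) k φ) : n < k := by
  refine lt_of_le_of_ne (h.le_of_top hn) fun hnk => ?_
  subst hnk
  obtain ⟨d, rfl⟩ : ∃ d, n = d + 1 := ⟨n - 1, by omega⟩
  have hodd :=
    h.odd_card_of_isRegularOfDegree (Nat.add_sub_cancel d 1 ▸ isRegularOfDegree_top_fin)
  rw [Fintype.card_fin] at hodd
  exact Nat.not_even_iff_odd.mpr hodd hev

end Complete

section Cyclic

variable {n : ℕ}

def cyclicColoring (n : ℕ) : Sym2 (Fin n) → ℕ :=
  Sym2.lift ⟨fun i j => (i + j).val + 1, fun i j => by simp only [add_comm]⟩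

lemma isPEC_cyclicColoring : IsPEC (⊤ : SimpleGraph (Fin n)) n (cyclicColoring n) := by
  refine ⟨fun e _ => ?_, fun u v w _ _ hvw hcol => hvw ?_⟩
  · induction e using Sym2.ind with
    | _ i j => exact mem_Icc.mpr ⟨Nat.le_add_left _ _, (i + j).isLt⟩
  · exact add_left_cancel (Fin.ext (by simpa [cyclicColoring] using hcol) : u + v = u + w)

lemma colorSum_cyclicColoring [NeZero n] (v : Fin n) :
    colorSum ⊤ (cyclicColoring n) v + ((v + v).val + 1) = ∑ i : Fin n, (i.val + 1) := by
  rw [show (v + v).val + 1 = cyclicColoring n s(v, v) from rfl, colorSum_top_add]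
  exact Equiv.sum_comp (Equiv.addLeft v) fun i : Fin n => i.val + 1

lemma add_self_injective_of_odd (hn : Odd n) : Injective fun v : Fin n => v + v := by
  intro v w hvw
  have hmod : 2 * v.val ≡ 2 * w.val [MOD n] := by
    simpa [Fin.ext_iff, Fin.val_add, Nat.ModEq, two_mul] using hvw
  have := hmod.cancel_left_of_coprime (Nat.coprime_two_right.mpr hn)
  exact Fin.ext (by simpa [Nat.ModEq, Nat.mod_eq_of_lt] using this)

lemma isSDC_cyclicColoring (hn : Odd n) :
    IsSDC (⊤ : SimpleGraph (Fin n)) n (cyclicColoring n) := by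
  have : NeZero n := ⟨hn.pos.ne'⟩
  refine ⟨isPEC_cyclicColoring, fun u v huv hsum => huv (add_self_injective_of_odd hn ?_)⟩
  have hu := colorSum_cyclicColoring u
  have hv := colorSum_cyclicColoring v
  exact Fin.ext (by simp only at *; omega)

end Cyclic

section Recolor

variable {V : Type*} [DecidableEq V]

def recolor (φ : Sym2 V → ℕ) (μ : V → V) (c : ℕ) : Sym2 V → ℕ :=
  Sym2.lift ⟨fun u w => if μ u = w ∧ μ w = u then c else φ s(u, w), fun u w => by
    simp only [and_comm, Sym2.eq_swap]⟩

variable {G : SimpleGraph V} {k c : ℕ} {φ : Sym2 V → ℕ}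

lemma recolor_mk (μ : V → V) (u w : V) :
    recolor φ μ c s(u, w) = if μ u = w ∧ μ w = u then c else φ s(u, w) :=
  rfl

lemma IsPEC.recolor (h : IsPEC G k φ) (μ : V → V) :
    IsPEC G (k + 1) (recolor φ μ (k + 1)) := by
  refine ⟨fun e he => ?_, fun u v w huv huw hvw => ?_⟩
  · induction e using Sym2.ind with
    | _ u w =>
      have := mem_Icc.mp (h.1 _ he)
      rw [recolor_mk]
      split_ifs <;> simp only [mem_Icc] <;> omega
  · have hv := mem_Icc.mp (h.1 s(u, v) huv)
    have hw := mem_Icc.mp (h.1 s(u, w) huw)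
    rw [recolor_mk, recolor_mk]
    split_ifs with h₁ h₂ h₂
    · exact fun _ => hvw (h₁.1.symm.trans h₂.1)
    · omega
    · omega
    · exact h.2 u v w huv huw hvw

variable [Fintype V] [DecidableRel G.Adj]

lemma colorSum_recolor_of_fixed {μ : V → V} {v : V} (hv : μ v = v) :
    colorSum G (recolor φ μ c) v = colorSum G φ v := by
  refine sum_congr rfl fun u hu => ?_
  rw [recolor_mk, if_neg fun h => G.ne_of_adj ((mem_neighborFinset G v u).mp hu) (hv ▸ h.1)]

lemma colorSum_recolor_of_adj {μ : V → V} (hμ : Involutive μ) {v : V} (hadj : G.Adj v (μ v)) :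
    colorSum G (recolor φ μ c) v + φ s(v, μ v) = colorSum G φ v + c := by
  have hmem : μ v ∈ G.neighborFinset v := (mem_neighborFinset G v _).mpr hadj
  rw [colorSum, colorSum, ← sum_erase_add _ _ hmem, ← sum_erase_add _ _ hmem,
    recolor_mk, if_pos ⟨rfl, hμ v⟩, add_right_comm]
  congr 2
  refine sum_congr rfl fun u hu => ?_
  rw [recolor_mk, if_neg fun h => (mem_erase.mp hu).1 h.1.symm]

end Recolor

section EvenComplete

variable {n : ℕ}

def deficit (μ : Fin n → Fin n) (v : Fin n) : ℕ :=
  (v + v).val + if μ v = v then n else (v + μ v).val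

lemma colorSum_recolor_cyclicColoring [NeZero n] {μ : Fin n → Fin n} (hμ : Involutive μ)
    (v : Fin n) :
    colorSum ⊤ (recolor (cyclicColoring n) μ (n + 1)) v + deficit μ v + 1 =
      ∑ i : Fin n, (i.val + 1) + n := by
  have hbase := colorSum_cyclicColoring v
  by_cases hv : μ v = v
  · rw [colorSum_recolor_of_fixed hv, deficit, if_pos hv]
    omega
  · have := colorSum_recolor_of_adj (G := ⊤) (φ := cyclicColoring n) (c := n + 1) hμ
      (v := v) (Ne.symm hv)
    rw [deficit, if_neg hv]
    change _ + ((v + μ v).val + 1) = _ at this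
    omega

lemma isSDC_recolor_cyclicColoring [NeZero n] {μ : Fin n → Fin n} (hμ : Involutive μ)
    (hδ : Injective (deficit μ)) :
    IsSDC (⊤ : SimpleGraph (Fin n)) (n + 1) (recolor (cyclicColoring n) μ (n + 1)) := by
  refine ⟨isPEC_cyclicColoring.recolor μ, fun u v huv hsum => huv (hδ ?_)⟩
  have hu := colorSum_recolor_cyclicColoring hμ u
  have hv := colorSum_recolor_cyclicColoring hμ v
  omega

end EvenComplete

section Pairing

/-- For `n = 2m` and `s = m % 2`, pairs up `s, s + 1`, then `s + 2, s + 3`, and so on, inside the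
window `[s, m + 2s)`, and fixes everything else. -/
def pairNat (n x : ℕ) : ℕ :=
  if n / 2 % 2 ≤ x ∧ x < n / 2 + 2 * (n / 2 % 2) then
    if x % 2 = n / 2 % 2 then x + 1 else x - 1
  else x

lemma pairNat_cases (n x : ℕ) :
    (n / 2 % 2 ≤ x ∧ x < n / 2 + 2 * (n / 2 % 2) ∧ x % 2 = n / 2 % 2 ∧
      pairNat n x = x + 1) ∨
    (n / 2 % 2 ≤ x ∧ x < n / 2 + 2 * (n / 2 % 2) ∧ x % 2 ≠ n / 2 % 2 ∧
      pairNat n x = x - 1) ∨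
    (¬(n / 2 % 2 ≤ x ∧ x < n / 2 + 2 * (n / 2 % 2)) ∧ pairNat n x = x) := by
  unfold pairNat
  split_ifs <;> simp_all

lemma Nat.mod_cases_of_lt_two_mul {a n : ℕ} (h : a < 2 * n) :
    a % n = a ∧ a < n ∨ a % n + n = a ∧ n ≤ a := by
  rcases Nat.lt_or_ge a n with h' | h'
  · exact .inl ⟨Nat.mod_eq_of_lt h', h'⟩
  · right
    rw [Nat.mod_eq_sub_mod h', Nat.mod_eq_of_lt (by omega)]
    omega

variable {n : ℕ}

lemma pairNat_lt (hn : 4 ≤ n) (hev : Even n) {x : ℕ} (hx : x < n) : pairNat n x < n := by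
  obtain ⟨m, rfl⟩ := hev
  rcases pairNat_cases (m + m) x with h | h | h <;> omega

lemma pairNat_pairNat (n x : ℕ) : pairNat n (pairNat n x) = x := by
  rcases pairNat_cases n x with h | h | h <;>
    rcases pairNat_cases n (pairNat n x) with h' | h' | h' <;> omega

/-- Paired vertices get odd deficits and fixed ones even deficits `2x mod n + n`; no two fixed
vertices differ by `n / 2`, so `x ↦ 2x mod n` separates them. -/
lemma pairNat_deficit_injOn (hn : 4 ≤ n) (hev : Even n) {x y : ℕ} (hx : x < n) (hy : y < n)
    (h : (x + x) % n + (if pairNat n x = x then n else (x + pairNat n x) % n) =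
      (y + y) % n + (if pairNat n y = y then n else (y + pairNat n y) % n)) : x = y := by
  have hpx := pairNat_lt hn hev hx
  have hpy := pairNat_lt hn hev hy
  have h2x := Nat.mod_cases_of_lt_two_mul (a := x + x) (n := n) (by omega)
  have h2y := Nat.mod_cases_of_lt_two_mul (a := y + y) (n := n) (by omega)
  have hsx := Nat.mod_cases_of_lt_two_mul (a := x + pairNat n x) (n := n) (by omega)
  have hsy := Nat.mod_cases_of_lt_two_mul (a := y + pairNat n y) (n := n) (by omega)
  obtain ⟨m, rfl⟩ := hev
  rcases pairNat_cases (m + m) x with hx' | hx' | hx' <;>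
    rcases pairNat_cases (m + m) y with hy' | hy' | hy' <;>
    split_ifs at h <;> omega

/-- The fallback branch is never taken for even `n ≥ 4`. -/
def pairing (n : ℕ) (v : Fin n) : Fin n :=
  if h : pairNat n v < n then ⟨pairNat n v, h⟩ else v

lemma pairing_val (hn : 4 ≤ n) (hev : Even n) (v : Fin n) : (pairing n v).val = pairNat n v := by
  rw [pairing, dif_pos (pairNat_lt hn hev v.isLt)]

lemma pairing_involutive (hn : 4 ≤ n) (hev : Even n) : Involutive (pairing n) :=
  fun v => Fin.ext <| by rw [pairing_val hn hev, pairing_val hn hev, pairNat_pairNat]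

lemma deficit_pairing_injective (hn : 4 ≤ n) (hev : Even n) :
    Injective (deficit (pairing n)) := by
  intro v w hvw
  simp only [deficit, Fin.ext_iff, Fin.val_add, pairing_val hn hev] at hvw
  exact Fin.ext (pairNat_deficit_injOn hn hev v.isLt w.isLt hvw)

end Pairing

/-- The sum-distinguishing chromatic index of `K_n` is `n+1` for even `n ≥ 4`
and `n` for odd `n ≥ 3`. -/
theorem stmt3 (n : ℕ) :
    (4 ≤ n → Even n → sdIndex (⊤ : SimpleGraph (Fin n)) = n + 1) ∧
    (3 ≤ n → Odd n → sdIndex (⊤ : SimpleGraph (Fin n)) = n) := by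
  refine ⟨fun hn hev => ?_, fun hn hodd => ?_⟩
  · have : NeZero n := ⟨by omega⟩
    exact sdIndex_eq ⟨_, isSDC_recolor_cyclicColoring (pairing_involutive hn hev)
      (deficit_pairing_injective hn hev)⟩ fun _ _ h => h.isVDC.lt_of_top_of_even (by omega) hev
  · exact sdIndex_eq ⟨_, isSDC_cyclicColoring hodd⟩ fun _ _ h => h.isVDC.le_of_top (by omega)
end

section
/- Let G be a d-regular graph on n vertices with d ≥ 2n/3 and n ≡ 0 (mod 3), say n = 3q. Then G contains a spanning subgraph that is the vertex-disjoint union of q copies of the star K_{1,2}. -/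
/-!
Grow a family of `k < q` vertex-disjoint cherries (copies of `K_{1,2}`) one at a time. If an
uncovered vertex has two uncovered neighbours, they form a new cherry. Otherwise each uncovered
vertex has at least `d - 1 ≥ 2k + 1` neighbours among the `3k` covered ones, so three uncovered
vertices send more than `6k` edges to the `k` cherries, hence at least seven to a single one.
Seven edges between two disjoint triples are enough to cover these six vertices by two cherries,
which replace the old one.
-/

open Finset Function Fintype

set_option maxRecDepth 10000 in
/-- As `p` fails on at most two of the nine pairs, some column `π 0` is full and, in the other
two columns, some row `σ 0` is full. -/
lemma exists_perms_of_six_lt_card (p : Fin 3 → Fin 3 → Prop) [DecidableRel p]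
    (hp : 6 < #{ab : Fin 3 × Fin 3 | p ab.1 ab.2}) :
    ∃ σ π : Equiv.Perm (Fin 3),
      p (σ 0) (π 1) ∧ p (σ 0) (π 2) ∧ p (σ 1) (π 0) ∧ p (σ 2) (π 0) := by
  have key : ∀ q : Fin 3 → Fin 3 → Bool, 6 < #{ab : Fin 3 × Fin 3 | q ab.1 ab.2} →
      ∃ σ π : Equiv.Perm (Fin 3),
        q (σ 0) (π 1) ∧ q (σ 0) (π 2) ∧ q (σ 1) (π 0) ∧ q (σ 2) (π 0) := by
    decide
  simpa using key (fun a b => p a b) (by simpa using hp)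

namespace SimpleGraph

variable {V ι κ : Type*} {G : SimpleGraph V}

def IsCherryPacking (G : SimpleGraph V) (f : ι × Fin 3 → V) : Prop :=
  Injective f ∧ ∀ i, G.Adj (f (i, 0)) (f (i, 1)) ∧ G.Adj (f (i, 0)) (f (i, 2))

namespace IsCherryPacking

variable {f : ι × Fin 3 → V}

lemma comp_prodMap (hf : G.IsCherryPacking f) {e : κ → ι} (he : Injective e) :
    G.IsCherryPacking (f ∘ Prod.map e id) :=
  ⟨hf.1.comp (he.prodMap injective_id), fun k => hf.2 (e k)⟩

lemma sumElim {g : κ × Fin 3 → V} (hf : G.IsCherryPacking f) (hg : G.IsCherryPacking g)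
    (hfg : ∀ a b, f a ≠ g b) :
    G.IsCherryPacking (Sum.elim f g ∘ Equiv.sumProdDistrib ι κ (Fin 3)) :=
  ⟨(hf.1.sumElim hg.1 hfg).comp (Equiv.injective _), fun | .inl i => hf.2 i | .inr k => hg.2 k⟩

lemma exists_fin_of_card_add_card_eq [Fintype ι] [Fintype κ] {g : κ × Fin 3 → V} {m : ℕ}
    (hf : G.IsCherryPacking f) (hg : G.IsCherryPacking g) (hfg : ∀ a b, f a ≠ g b)
    (hm : card ι + card κ = m) : ∃ f' : Fin m × Fin 3 → V, G.IsCherryPacking f' := by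
  subst hm
  rw [← card_sum]
  exact ⟨_, (hf.sumElim hg hfg).comp_prodMap (equivFin (ι ⊕ κ)).symm.injective⟩

end IsCherryPacking

lemma exists_isCherryPacking_fin_two [DecidableRel G.Adj] {x c : Fin 3 → V} (hx : Injective x)
    (hc : Injective c) (hxc : ∀ a b, x a ≠ c b)
    (h : 6 < #{ab : Fin 3 × Fin 3 | G.Adj (x ab.1) (c ab.2)}) :
    ∃ g : Fin 2 × Fin 3 → V,
      G.IsCherryPacking g ∧ Set.range g ⊆ Set.range x ∪ Set.range c := by
  obtain ⟨σ, π, h01, h02, h10, h20⟩ :=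
    exists_perms_of_six_lt_card (fun a b => G.Adj (x a) (c b)) h
  let τ : Fin 2 × Fin 3 → Fin 3 ⊕ Fin 3 := fun ij =>
    ![![.inl 0, .inr 1, .inr 2], ![.inr 0, .inl 1, .inl 2]] ij.1 ij.2
  have hτ : Injective τ := by decide
  refine ⟨Sum.elim x c ∘ Sum.map σ π ∘ τ, ⟨(hx.sumElim hc hxc).comp
    ((Sum.map_injective.2 ⟨σ.injective, π.injective⟩).comp hτ), ?_⟩, ?_⟩
  · intro i
    fin_cases i
    · exact ⟨h01, h02⟩
    · exact ⟨h10.symm, h20.symm⟩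
  · rw [← Set.Sum.elim_range]
    exact Set.range_comp_subset_range _ _

lemma exists_six_lt_card_adj [DecidableRel G.Adj] [Fintype ι] {d : ℕ}
    (f : ι × Fin 3 → V) (x : Fin 3 → V)
    (hd : 2 * (card ι + 1) ≤ d) (hx : ∀ a, d ≤ #{ib | G.Adj (x a) (f ib)} + 1) :
    ∃ i, 6 < #{ab : Fin 3 × Fin 3 | G.Adj (x ab.1) (f (i, ab.2))} := by
  have hswap : ∑ i, #{ab : Fin 3 × Fin 3 | G.Adj (x ab.1) (f (i, ab.2))} =
      ∑ a, #{ib | G.Adj (x a) (f ib)} := by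
    simp only [card_filter, Fintype.sum_prod_type]
    exact sum_comm
  have hsum : ∑ _i : ι, 6 < ∑ i, #{ab : Fin 3 × Fin 3 | G.Adj (x ab.1) (f (i, ab.2))} := by
    have := hx 0; have := hx 1; have := hx 2
    rw [hswap, Fin.sum_univ_three, sum_const, card_univ, smul_eq_mul]
    omega
  obtain ⟨i, -, hi⟩ := exists_lt_of_sum_lt hsum
  exact ⟨i, hi⟩

variable [Fintype V] [DecidableEq V] [DecidableRel G.Adj]

lemma degree_le_card_sdiff_image_add_card_adj [Fintype ι] (f : ι → V) (v : V) :
    G.degree v ≤ #(G.neighborFinset v \ univ.image f) + #{i | G.Adj v (f i)} := by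
  have hsub : G.neighborFinset v ⊆
      (G.neighborFinset v \ univ.image f) ∪ (univ.filter fun i => G.Adj v (f i)).image f := by
    intro w hw
    by_cases hwf : w ∈ univ.image f
    · obtain ⟨i, -, rfl⟩ := mem_image.1 hwf
      exact mem_union_right _ (mem_image_of_mem f (by simpa using hw))
    · exact mem_union_left _ (mem_sdiff.2 ⟨hw, hwf⟩)
  rw [← card_neighborFinset_eq_degree]
  exact (card_le_card hsub).trans ((card_union_le _ _).trans (by gcongr; exact card_image_le))

namespace IsCherryPacking

variable [Fintype ι] {f : ι × Fin 3 → V}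

lemma exists_succ_of_one_lt_card_sdiff (hf : G.IsCherryPacking f) {r : V}
    (hr : r ∉ univ.image f) (h : 1 < #(G.neighborFinset r \ univ.image f)) :
    ∃ f' : Fin (card ι + 1) × Fin 3 → V, G.IsCherryPacking f' := by
  obtain ⟨u, hu, v, hv, huv⟩ := one_lt_card.1 h
  simp only [mem_sdiff, mem_neighborFinset] at hu hv
  have hg : G.IsCherryPacking (fun ij : Fin 1 × Fin 3 => ![r, u, v] ij.2) := by
    refine ⟨?_, fun _ => ⟨hu.1, hv.1⟩⟩
    rintro ⟨i, a⟩ ⟨i', b⟩ hab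
    rw [Subsingleton.elim i i']
    fin_cases a <;> fin_cases b <;> simp_all [G.ne_of_adj]
  refine hf.exists_fin_of_card_add_card_eq hg ?_ (by simp)
  have hnew (a : Fin 3) : ![r, u, v] a ∉ univ.image f := by
    fin_cases a
    exacts [hr, hu.2, hv.2]
  intro ib jb hab
  exact hnew jb.2 (mem_image.2 ⟨ib, mem_univ _, hab⟩)

lemma exists_succ_of_card_sdiff_le_one (hf : G.IsCherryPacking f) {d : ℕ}
    (hdeg : ∀ v, d ≤ G.degree v) (hroom : 3 * (card ι + 1) ≤ card V)
    (hd : 2 * (card ι + 1) ≤ d)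
    (h : ∀ r ∉ univ.image f, #(G.neighborFinset r \ univ.image f) ≤ 1) :
    ∃ f' : Fin (card ι + 1) × Fin 3 → V, G.IsCherryPacking f' := by
  classical
  have hR : card (Fin 3) ≤ card {v // v ∉ univ.image f} := by
    rw [card_subtype_compl, Fintype.card_fin, Fintype.card_coe, card_image_of_injective _ hf.1]
    simp only [card_univ, card_prod, Fintype.card_fin]
    omega
  obtain ⟨x⟩ := Function.Embedding.nonempty_of_card_le hR
  have hxR (a : Fin 3) : (x a : V) ∉ univ.image f := (x a).2
  obtain ⟨i, hi⟩ := exists_six_lt_card_adj (G := G) f (fun a => x a) hd fun a =>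
    (hdeg _).trans ((degree_le_card_sdiff_image_add_card_adj f (x a)).trans
      (by have := h _ (hxR a); omega))
  obtain ⟨g, hg, hgx⟩ := exists_isCherryPacking_fin_two
    (Subtype.val_injective.comp x.injective) (hf.1.comp (Prod.mk_right_injective i))
    (fun a b hab => hxR a (mem_image.2 ⟨(i, b), mem_univ _, hab.symm⟩)) hi
  refine (hf.comp_prodMap (Subtype.val_injective (p := (· ≠ i)))).exists_fin_of_card_add_card_eq
    hg ?_ ?_
  · rintro ⟨⟨i', hi'⟩, a⟩ b hab
    obtain ⟨a', ha'⟩ | ⟨b', hb'⟩ := hgx (Set.mem_range_self b)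
    · exact hxR a' (mem_image.2 ⟨(i', a), mem_univ _, hab.trans ha'.symm⟩)
    · exact hi' (congrArg Prod.fst (hf.1 (hab.trans hb'.symm)))
  · have : 0 < card ι := card_pos_iff.2 ⟨i⟩
    simp only [card_subtype_compl, card_subtype_eq, Fintype.card_fin]
    omega

theorem exists_succ (hf : G.IsCherryPacking f) {d : ℕ} (hdeg : ∀ v, d ≤ G.degree v)
    (hroom : 3 * (card ι + 1) ≤ card V) (hd : 2 * (card ι + 1) ≤ d) :
    ∃ f' : Fin (card ι + 1) × Fin 3 → V, G.IsCherryPacking f' := by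
  by_cases h : ∃ r ∉ univ.image f, 1 < #(G.neighborFinset r \ univ.image f)
  · obtain ⟨r, hr, hr1⟩ := h
    exact hf.exists_succ_of_one_lt_card_sdiff hr hr1
  · push Not at h
    exact hf.exists_succ_of_card_sdiff_le_one hdeg hroom hd h

end IsCherryPacking

theorem exists_isCherryPacking {d : ℕ} (hdeg : ∀ v, d ≤ G.degree v) :
    ∀ k, 3 * k ≤ card V → 2 * k ≤ d → ∃ f : Fin k × Fin 3 → V, G.IsCherryPacking f
  | 0, _, _ => ⟨isEmptyElim, injective_of_subsingleton _, fun i => i.elim0⟩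
  | k + 1, hroom, hd => by
    obtain ⟨f, hf⟩ := exists_isCherryPacking hdeg k (by omega) (by omega)
    have := hf.exists_succ hdeg (by simpa using hroom) (by simpa using hd)
    rwa [Fintype.card_fin] at this

end SimpleGraph

/-- A `d`-regular graph on `n = 3q` vertices with `d ≥ 2n/3` has a spanning subgraph that is
the vertex-disjoint union of `q` copies of `K_{1,2}` (the equivalence `e` enumerates the
vertices; `e (i,0)` is the center of the `i`-th star). -/
theorem stmt7 {V : Type*} [Fintype V] (G : SimpleGraph V) [DecidableRel G.Adj]
    (n d q : ℕ) (hn : Fintype.card V = n) (hreg : G.IsRegularOfDegree d)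
    (hd : 2 * n ≤ 3 * d) (hq : n = 3 * q) :
    ∃ e : (Fin q × Fin 3) ≃ V, ∀ i : Fin q,
      G.Adj (e (i, 0)) (e (i, 1)) ∧ G.Adj (e (i, 0)) (e (i, 2)) := by
  classical
  obtain ⟨f, hf⟩ := G.exists_isCherryPacking (fun v => (hreg v).ge) q (by omega) (by omega)
  have hbij : Bijective f :=
    (bijective_iff_injective_and_card f).2 ⟨hf.1, by simp [hn, hq, mul_comm]⟩
  exact ⟨Equiv.ofBijective f hbij, hf.2⟩
end
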